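/- Let L be a bounded self-adjoint positive semidefinite invertible operator on a Hilbert space H, S a closed subspace with ‖φ‖ ≤ Λ‖Lφ‖ for all φ ∈ S, and f ∈ H with ‖L^k f‖ ≤ ω^k‖f‖ for all k ∈ ℕ, where ω < 1/Λ. For k = 2^l, let Y_k be any element of H with f − Y_k ∈ S and ‖L^k Y_k‖ ≤ ‖L^k f‖. Then ‖f − Y_k‖ ≤ 2(Λω)^k ‖f‖; in particular Y_k → f as l → ∞. -/

import Mathlib

/-!
Put `k = 2 ^ l` and `φ = f - Y_k ∈ S`. For a symmetric `T`, Cauchy–Schwarz gives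
`‖T x‖² = ⟪T² x, x⟫ ≤ ‖T² x‖ ‖x‖`; iterating along powers of two yields
`‖L φ‖ ^ k ≤ ‖L ^ k φ‖ ‖φ‖ ^ (k - 1)`. Raising the Poincaré inequality `‖φ‖ ≤ Λ ‖L φ‖` to the
`k`-th power and cancelling `‖φ‖ ^ (k - 1)` gives `‖φ‖ ≤ Λ ^ k ‖L ^ k φ‖ ≤ 2 (Λ ω) ^ k ‖f‖`,
since `‖L ^ k φ‖ ≤ ‖L ^ k f‖ + ‖L ^ k Y_k‖ ≤ 2 ‖L ^ k f‖`.
-/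

open Filter

namespace LinearMap.IsSymmetric

variable {𝕜 E : Type*} [RCLike 𝕜] [NormedAddCommGroup E] [InnerProductSpace 𝕜 E]
  {T : E →ₗ[𝕜] E}

theorem norm_apply_sq_le (hT : T.IsSymmetric) (x : E) : ‖T x‖ ^ 2 ≤ ‖T (T x)‖ * ‖x‖ :=
  calc ‖T x‖ ^ 2 = RCLike.re (inner 𝕜 (T (T x)) x) := by
        rw [hT, inner_self_eq_norm_sq]
    _ ≤ ‖inner 𝕜 (T (T x)) x‖ := RCLike.re_le_norm _
    _ ≤ ‖T (T x)‖ * ‖x‖ := norm_inner_le_norm _ _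

theorem norm_apply_pow_two_pow_le (hT : T.IsSymmetric) (x : E) (l : ℕ) :
    ‖T x‖ ^ 2 ^ l ≤ ‖(T ^ 2 ^ l) x‖ * ‖x‖ ^ (2 ^ l - 1) := by
  induction l with
  | zero => simp
  | succ l ih =>
    set m := 2 ^ l
    have hm : 1 ≤ m := Nat.one_le_two_pow
    have hsq : ‖(T ^ m) x‖ ^ 2 ≤ ‖(T ^ (2 ^ (l + 1))) x‖ * ‖x‖ := by
      have hpow : (T ^ m) ((T ^ m) x) = (T ^ 2 ^ (l + 1)) x := by
        rw [pow_succ, pow_mul, sq, Module.End.mul_apply]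
      simpa only [hpow] using (hT.pow m).norm_apply_sq_le x
    calc ‖T x‖ ^ 2 ^ (l + 1) = (‖T x‖ ^ m) ^ 2 := by rw [← pow_mul, pow_succ]
      _ ≤ (‖(T ^ m) x‖ * ‖x‖ ^ (m - 1)) ^ 2 := by gcongr
      _ = ‖(T ^ m) x‖ ^ 2 * ‖x‖ ^ (2 * (m - 1)) := by rw [mul_pow, ← pow_mul, mul_comm (m - 1)]
      _ ≤ ‖(T ^ 2 ^ (l + 1)) x‖ * ‖x‖ * ‖x‖ ^ (2 * (m - 1)) := by gcongr
      _ = ‖(T ^ 2 ^ (l + 1)) x‖ * ‖x‖ ^ (2 ^ (l + 1) - 1) := by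
        rw [mul_assoc, ← pow_succ', pow_succ]
        congr 2
        omega

theorem norm_le_of_le_mul_norm_apply (hT : T.IsSymmetric) {Λ c : ℝ} (hΛ : 0 ≤ Λ) {x : E}
    (hx : ‖x‖ ≤ Λ * ‖T x‖) (l : ℕ) (hc : ‖(T ^ 2 ^ l) x‖ ≤ c) : ‖x‖ ≤ Λ ^ 2 ^ l * c := by
  set k := 2 ^ l
  rcases (norm_nonneg x).eq_or_lt with hx0 | hx0
  · rw [← hx0]
    exact mul_nonneg (pow_nonneg hΛ _) ((norm_nonneg _).trans hc)
  have hk : k - 1 + 1 = k := Nat.sub_add_cancel Nat.one_le_two_pow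
  refine le_of_mul_le_mul_left ?_ (pow_pos hx0 (k - 1))
  calc ‖x‖ ^ (k - 1) * ‖x‖ = ‖x‖ ^ k := by rw [← pow_succ, hk]
    _ ≤ (Λ * ‖T x‖) ^ k := by gcongr
    _ = Λ ^ k * ‖T x‖ ^ k := mul_pow _ _ _
    _ ≤ Λ ^ k * (‖(T ^ k) x‖ * ‖x‖ ^ (k - 1)) := by
      gcongr
      exact hT.norm_apply_pow_two_pow_le x l
    _ ≤ Λ ^ k * (c * ‖x‖ ^ (k - 1)) := by gcongr
    _ = ‖x‖ ^ (k - 1) * (Λ ^ k * c) := by ring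

end LinearMap.IsSymmetric

theorem stmt_17_general {H : Type*} [NormedAddCommGroup H] [InnerProductSpace ℂ H]
    (L : H →L[ℂ] H) (hL : L.IsPositive)
    (S : Submodule ℂ H)
    (Λ : ℝ) (hΛ : 0 < Λ) (hPoin : ∀ φ ∈ S, ‖φ‖ ≤ Λ * ‖L φ‖)
    (ω : ℝ) (hω : 0 ≤ ω) (hωΛ : ω < 1 / Λ)
    (f : H) (hf : ∀ k : ℕ, ‖(L ^ k) f‖ ≤ ω ^ k * ‖f‖)
    (Y : ℕ → H) (hYS : ∀ l : ℕ, f - Y l ∈ S)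
    (hYmin : ∀ l : ℕ, ‖(L ^ (2 ^ l)) (Y l)‖ ≤ ‖(L ^ (2 ^ l)) f‖) :
    (∀ l : ℕ, ‖f - Y l‖ ≤ 2 * (Λ * ω) ^ (2 ^ l) * ‖f‖) ∧
      Tendsto Y atTop (nhds f) := by
  have bound (l : ℕ) : ‖f - Y l‖ ≤ 2 * (Λ * ω) ^ (2 ^ l) * ‖f‖ := by
    have hdiff : ‖(L ^ 2 ^ l) (f - Y l)‖ ≤ 2 * ω ^ 2 ^ l * ‖f‖ := by
      rw [map_sub]
      linarith [norm_sub_le ((L ^ 2 ^ l) f) ((L ^ 2 ^ l) (Y l)), hYmin l, hf (2 ^ l)]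
    calc ‖f - Y l‖ ≤ Λ ^ 2 ^ l * (2 * ω ^ 2 ^ l * ‖f‖) :=
          hL.isSymmetric.norm_le_of_le_mul_norm_apply hΛ.le (hPoin _ (hYS l)) l
            (by rwa [← L.toLinearMap_pow])
      _ = 2 * (Λ * ω) ^ 2 ^ l * ‖f‖ := by ring
  have hΛω : Λ * ω < 1 := by rwa [lt_div_iff₀ hΛ, mul_comm] at hωΛ
  have hlim : Tendsto (fun l : ℕ ↦ 2 * (Λ * ω) ^ 2 ^ l * ‖f‖) atTop (nhds 0) := by
    simpa using (((tendsto_pow_atTop_nhds_zero_of_lt_one (by positivity) hΛω).comp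
      (tendsto_pow_atTop_atTop_of_one_lt one_lt_two)).const_mul 2).mul_const ‖f‖
  refine ⟨bound, tendsto_iff_norm_sub_tendsto_zero.2 ?_⟩
  exact squeeze_zero (fun _ ↦ norm_nonneg _) (fun l ↦ norm_sub_rev (Y l) f ▸ bound l) hlim

/-- Let `L` be a bounded self-adjoint positive semidefinite invertible
operator on a complex Hilbert space `H`, `S` a closed subspace with `‖φ‖ ≤ Λ‖Lφ‖` for
`φ ∈ S`, and `f ∈ H` with `‖L^k f‖ ≤ ω^k ‖f‖` for all `k ∈ ℕ`, where `ω < 1/Λ`.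
For `k = 2^l`, let `Y l` satisfy `f - Y l ∈ S` and `‖L^k (Y l)‖ ≤ ‖L^k f‖`.
Then `‖f - Y l‖ ≤ 2 (Λω)^k ‖f‖`; in particular `Y l → f` as `l → ∞`. -/
theorem stmt_17 {H : Type*} [NormedAddCommGroup H] [InnerProductSpace ℂ H] [CompleteSpace H]
    (L : H →L[ℂ] H) (hL : L.IsPositive) (hinv : IsUnit L)
    (S : Submodule ℂ H) (hS : IsClosed (S : Set H))
    (Λ : ℝ) (hΛ : 0 < Λ) (hPoin : ∀ φ ∈ S, ‖φ‖ ≤ Λ * ‖L φ‖)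
    (ω : ℝ) (hω : 0 ≤ ω) (hωΛ : ω < 1 / Λ)
    (f : H) (hf : ∀ k : ℕ, ‖(L ^ k) f‖ ≤ ω ^ k * ‖f‖)
    (Y : ℕ → H) (hYS : ∀ l : ℕ, f - Y l ∈ S)
    (hYmin : ∀ l : ℕ, ‖(L ^ (2 ^ l)) (Y l)‖ ≤ ‖(L ^ (2 ^ l)) f‖) :
    (∀ l : ℕ, ‖f - Y l‖ ≤ 2 * (Λ * ω) ^ (2 ^ l) * ‖f‖) ∧
      Tendsto Y atTop (nhds f) :=
  stmt_17_general L hL S Λ hΛ hPoin ω hω hωΛ f hf Y hYS hYmin
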